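/- (Corollary 3.8, Euclidean model: Ghoussoub–Moradifam-type weighted Hardy inequality.) Let C > 1 and m ∈ ℝ with C - 2m - 1 ≥ 0, and let c, d > 0 and θ, β ∈ ℝ with θβ > 0. Assume Δ^D ρ ≥ (C/ρ)·V^{λ-μ} pointwise on ℝⁿ \ ρ^{-1}{0}. Then for every φ ∈ C_c^∞(ℝⁿ \ ρ^{-1}{0}) one has ∫_{ℝⁿ} ((c + d ρ^θ)^β / ρ^{2m}) |∇^D φ|² V^{τ+λ-μ} dx ≥ ((C-2m-1)/2)² ∫_{ℝⁿ} ((c + d ρ^θ)^β / ρ^{2m+2}) φ² V^{τ+λ-μ} dx. -/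

import Mathlib

open MeasureTheory Real

noncomputable section

/-- Euclidean divergence of a vector field on `ℝⁿ`. -/
def divE {n : ℕ} (X : EuclideanSpace ℝ (Fin n) → EuclideanSpace ℝ (Fin n))
    (x : EuclideanSpace ℝ (Fin n)) : ℝ :=
  ∑ i, fderiv ℝ X x (EuclideanSpace.single i 1) i

/-- Euclidean Laplacian. -/
def lapE {n : ℕ} (f : EuclideanSpace ℝ (Fin n) → ℝ) (x : EuclideanSpace ℝ (Fin n)) : ℝ :=
  divE (fun y => gradient f y) x

/-- `V^s = e^{s·u}`. -/
def Vpow {n : ℕ} (u : EuclideanSpace ℝ (Fin n) → ℝ) (s : ℝ)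
    (x : EuclideanSpace ℝ (Fin n)) : ℝ :=
  Real.exp (s * u x)

/-- Affine gradient `∇^D f = V^{μ-λ} ∇f`. -/
def gradD {n : ℕ} (lam mu : ℝ) (u f : EuclideanSpace ℝ (Fin n) → ℝ)
    (x : EuclideanSpace ℝ (Fin n)) : EuclideanSpace ℝ (Fin n) :=
  Vpow u (mu - lam) x • gradient f x

/-- Affine Laplacian `Δ^D f = V^{μ-λ}(Δf + (2μ + nλ)⟨∇u, ∇f⟩)`. -/
def lapD {n : ℕ} (lam mu : ℝ) (u f : EuclideanSpace ℝ (Fin n) → ℝ)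
    (x : EuclideanSpace ℝ (Fin n)) : ℝ :=
  Vpow u (mu - lam) x *
    (lapE f x + (2 * mu + (n : ℝ) * lam) * (inner ℝ (gradient u x) (gradient f x) : ℝ))

/-! ### Auxiliary lemmas -/

section Aux

variable {n : ℕ}

lemma inner_gradient (f : EuclideanSpace ℝ (Fin n) → ℝ) (x v : EuclideanSpace ℝ (Fin n)) :
    (inner ℝ (gradient f x) v : ℝ) = fderiv ℝ f x v := by
  simp [gradient, InnerProductSpace.toDual_symm_apply]

lemma gradient_apply (f : EuclideanSpace ℝ (Fin n) → ℝ) (x : EuclideanSpace ℝ (Fin n)) (i : Fin n) :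
    gradient f x i = fderiv ℝ f x (EuclideanSpace.single i 1) := by
  rw [← inner_gradient, EuclideanSpace.inner_single_right]
  simp

lemma inner_sum' (a b : EuclideanSpace ℝ (Fin n)) : (inner ℝ a b : ℝ) = ∑ i, a i * b i := by
  simp [PiLp.inner_apply, RCLike.inner_apply, mul_comm]

lemma proj_fderiv {X : EuclideanSpace ℝ (Fin n) → EuclideanSpace ℝ (Fin n)}
    {x : EuclideanSpace ℝ (Fin n)} (hX : DifferentiableAt ℝ X x) (v : EuclideanSpace ℝ (Fin n))
    (i : Fin n) : fderiv ℝ (fun y => X y i) x v = fderiv ℝ X x v i := by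
  have : (fun y => X y i) = (EuclideanSpace.proj (𝕜 := ℝ) i) ∘ X := rfl
  rw [this, fderiv_comp x (EuclideanSpace.proj (𝕜 := ℝ) i).differentiableAt hX]
  rw [ContinuousLinearMap.fderiv]; rfl

theorem integral_deriv_comp_zero {f : EuclideanSpace ℝ (Fin n) → ℝ}
    (hf : ContDiff ℝ (⊤ : ℕ∞) f) (hfc : HasCompactSupport f) (v : EuclideanSpace ℝ (Fin n)) :
    ∫ x, fderiv ℝ f x v = 0 := by
  have h1 : Continuous fun x => fderiv ℝ f x v :=
    (hf.continuous_fderiv (by simp)).clm_apply continuous_const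
  have h2 : HasCompactSupport fun x => fderiv ℝ f x v :=
    (hfc.fderiv ℝ).comp_left (g := fun L : (EuclideanSpace ℝ (Fin n)) →L[ℝ] ℝ => L v) rfl
  have := integral_mul_fderiv_eq_neg_fderiv_mul_of_integrable
      (μ := (volume : Measure (EuclideanSpace ℝ (Fin n))))
      (f := fun _ : EuclideanSpace ℝ (Fin n) => (1 : ℝ)) (g := f) (v := v)
      ?_ ?_ ?_ (fun x _ => differentiableAt_const 1) (fun x _ => hf.differentiable (by simp) x)
  · simpa [fderiv_const] using this
  · simp [fderiv_const]
  · simpa using h1.integrable_of_hasCompactSupport h2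
  · simpa using hf.continuous.integrable_of_hasCompactSupport hfc

theorem integral_divE_eq_zero (X : EuclideanSpace ℝ (Fin n) → EuclideanSpace ℝ (Fin n))
    (hX : ContDiff ℝ (⊤ : ℕ∞) X) (hXc : HasCompactSupport X) : ∫ x, divE X x = 0 := by
  have hXi : ∀ i : Fin n, ContDiff ℝ (⊤ : ℕ∞) (fun y => X y i) := fun i =>
    (EuclideanSpace.proj (𝕜 := ℝ) i).contDiff.comp hX
  have hXic : ∀ i : Fin n, HasCompactSupport (fun y => X y i) := fun i =>
    hXc.comp_left (g := fun w : EuclideanSpace ℝ (Fin n) => w i) rfl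
  have key : ∀ i : Fin n, ∫ x, fderiv ℝ X x (EuclideanSpace.single i 1) i = 0 := by
    intro i
    rw [show (fun x => fderiv ℝ X x (EuclideanSpace.single i 1) i)
        = fun x => fderiv ℝ (fun y => X y i) x (EuclideanSpace.single i 1) from
      funext fun x => (proj_fderiv ((hX.differentiable (by simp)) x) _ i).symm]
    exact integral_deriv_comp_zero (hXi i) (hXic i) _
  unfold divE
  rw [integral_finset_sum]
  · simp [key]
  · intro i _
    have h1 : Continuous fun x => fderiv ℝ X x (EuclideanSpace.single i 1) i :=
      (EuclideanSpace.proj (𝕜 := ℝ) i).continuous.comp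
        ((hX.continuous_fderiv (by simp)).clm_apply continuous_const)
    have h2 : HasCompactSupport fun x => fderiv ℝ X x (EuclideanSpace.single i 1) i :=
      (hXc.fderiv ℝ).comp_left
        (g := fun L : (EuclideanSpace ℝ (Fin n)) →L[ℝ] EuclideanSpace ℝ (Fin n) =>
          L (EuclideanSpace.single i 1) i) (by simp)
    exact h1.integrable_of_hasCompactSupport h2

lemma gradient_contDiff {f : EuclideanSpace ℝ (Fin n) → ℝ} (hf : ContDiff ℝ (⊤ : ℕ∞) f) :
    ContDiff ℝ (⊤ : ℕ∞) (fun y => gradient f y) := by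
  have h1 : ContDiff ℝ (⊤ : ℕ∞) (fderiv ℝ f) := hf.fderiv_right (by simp)
  have h2 : (fun y => gradient f y) =
      fun y => (InnerProductSpace.toDual ℝ (EuclideanSpace ℝ (Fin n))).symm (fderiv ℝ f y) := rfl
  rw [h2]
  exact ((InnerProductSpace.toDual ℝ
    (EuclideanSpace ℝ (Fin n))).symm.toContinuousLinearEquiv.toContinuousLinearMap.contDiff).comp h1

lemma divE_smul_grad {ψ g : EuclideanSpace ℝ (Fin n) → ℝ} {x : EuclideanSpace ℝ (Fin n)}
    (hψ : DifferentiableAt ℝ ψ x) (hg : ContDiff ℝ (⊤ : ℕ∞) g) :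
    divE (fun y => ψ y • gradient g y) x
      = fderiv ℝ ψ x (gradient g x) + ψ x * lapE g x := by
  have hgsm : ContDiff ℝ (⊤ : ℕ∞) (fun y => gradient g y) := gradient_contDiff hg
  have hgd : DifferentiableAt ℝ (fun y => gradient g y) x := hgsm.differentiable (by simp) x
  have hz : HasFDerivAt (fun y => ψ y • gradient g y)
      (ψ x • fderiv ℝ (fun y => gradient g y) x
        + (fderiv ℝ ψ x).smulRight (gradient g x)) x :=
    hψ.hasFDerivAt.smul hgd.hasFDerivAt
  unfold divE lapE divE
  rw [hz.fderiv]
  simp only [ContinuousLinearMap.add_apply, ContinuousLinearMap.smul_apply,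
    ContinuousLinearMap.smulRight_apply, PiLp.add_apply, PiLp.smul_apply, smul_eq_mul]
  rw [Finset.sum_add_distrib, ← Finset.mul_sum, add_comm]
  congr 1
  rw [← inner_gradient ψ x (gradient g x), inner_sum']
  exact Finset.sum_congr rfl fun i _ => by rw [gradient_apply ψ]

lemma divE_smul_grad' {ψ g : EuclideanSpace ℝ (Fin n) → ℝ} {x : EuclideanSpace ℝ (Fin n)}
    {D : EuclideanSpace ℝ (Fin n) →L[ℝ] ℝ}
    (hψ : HasFDerivAt ψ D x) (hg : ContDiff ℝ (⊤ : ℕ∞) g) :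
    divE (fun y => ψ y • gradient g y) x = D (gradient g x) + ψ x * lapE g x := by
  rw [← hψ.fderiv]
  exact divE_smul_grad hψ.differentiableAt hg

lemma glue_contDiff {F : Type*} [NormedAddCommGroup F] [NormedSpace ℝ F]
    {f : EuclideanSpace ℝ (Fin n) → F} {K U : Set (EuclideanSpace ℝ (Fin n))}
    (hK : IsClosed K) (hKU : K ⊆ U)
    (hf : ∀ x ∈ U, ContDiffAt ℝ (⊤ : ℕ∞) f x) (h0 : ∀ x ∉ K, f x = 0) : ContDiff ℝ (⊤ : ℕ∞) f := by
  rw [contDiff_iff_contDiffAt]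
  intro x
  by_cases hx : x ∈ U
  · exact hf x hx
  · have hxK : x ∉ K := fun h => hx (hKU h)
    have hev : (fun _ => (0 : F)) =ᶠ[nhds x] f :=
      Filter.eventuallyEq_of_mem (hK.isOpen_compl.mem_nhds hxK) (fun y hy => (h0 y hy).symm)
    exact contDiffAt_const.congr_of_eventuallyEq hev.symm

lemma glue_continuous {f : EuclideanSpace ℝ (Fin n) → ℝ}
    {K U : Set (EuclideanSpace ℝ (Fin n))}
    (hK : IsClosed K) (hKU : K ⊆ U)
    (hf : ∀ x ∈ U, ContinuousAt f x) (h0 : ∀ x ∉ K, f x = 0) : Continuous f := by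
  rw [continuous_iff_continuousAt]
  intro x
  by_cases hx : x ∈ U
  · exact hf x hx
  · have hxK : x ∉ K := fun h => hx (hKU h)
    have hev : (fun _ => (0 : ℝ)) =ᶠ[nhds x] f :=
      Filter.eventuallyEq_of_mem (hK.isOpen_compl.mem_nhds hxK) (fun y hy => (h0 y hy).symm)
    exact continuousAt_const.congr hev

lemma amgm_aux {ε A B : ℝ} (hε : 0 < ε) : 2 * A * B ≤ ε * A ^ 2 + ε⁻¹ * B ^ 2 := by
  have h := sq_nonneg (ε * A - B)
  have h2 : 0 < ε⁻¹ := inv_pos.2 hε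
  nlinarith [mul_nonneg h2.le h, mul_inv_cancel₀ hε.ne']

end Aux

theorem stmt6 {n : ℕ} (hn : 1 ≤ n) (lam mu : ℝ)
    (u : EuclideanSpace ℝ (Fin n) → ℝ) (hu : ContDiff ℝ (⊤ : ℕ∞) u)
    (τ : ℝ) (hτ : τ = ((n : ℝ) + 1) * lam + mu)
    (ρ : EuclideanSpace ℝ (Fin n) → ℝ) (hρsm : ContDiff ℝ (⊤ : ℕ∞) ρ)
    (hρ0 : ∀ x, 0 ≤ ρ x)
    (hρg : ∀ x, ρ x ≠ 0 → ‖gradD lam mu u ρ x‖ = 1)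
    (C m c d θ β : ℝ) (hC : 1 < C) (hm : 0 ≤ C - 2 * m - 1)
    (hc : 0 < c) (hd : 0 < d) (hθβ : 0 < θ * β)
    (hΔ : ∀ x, ρ x ≠ 0 → (C / ρ x) * Vpow u (lam - mu) x ≤ lapD lam mu u ρ x)
    (φ : EuclideanSpace ℝ (Fin n) → ℝ) (hφ : ContDiff ℝ (⊤ : ℕ∞) φ)
    (hφc : HasCompactSupport φ) (hφs : tsupport φ ⊆ {x | ρ x ≠ 0}) :
    ∫ x, ((c + d * ρ x ^ θ) ^ β / ρ x ^ (2 * m)) * ‖gradD lam mu u φ x‖ ^ 2 *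
        Vpow u (τ + lam - mu) x ≥
      ((C - 2 * m - 1) / 2) ^ 2 *
        ∫ x, ((c + d * ρ x ^ θ) ^ β / ρ x ^ (2 * m + 2)) * φ x ^ 2 *
          Vpow u (τ + lam - mu) x := by
  classical
  have hρd : Differentiable ℝ ρ := hρsm.differentiable (by simp)
  have hφd : Differentiable ℝ φ := hφ.differentiable (by simp)
  have hud : Differentiable ℝ u := hu.differentiable (by simp)
  set U : Set (EuclideanSpace ℝ (Fin n)) := {x | ρ x ≠ 0} with hUdef
  set K : Set (EuclideanSpace ℝ (Fin n)) := tsupport φ with hKdef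
  have hKc : IsClosed K := isClosed_tsupport φ
  have hKcomp : IsCompact K := hφc
  have hKU : K ⊆ U := hφs
  have hρpos : ∀ x ∈ U, 0 < ρ x := fun x hx => lt_of_le_of_ne (hρ0 x) (Ne.symm hx)
  have hφz : ∀ x ∉ K, φ x = 0 := fun x hx => image_eq_zero_of_notMem_tsupport hx
  have hVpos : ∀ (s : ℝ) (x : EuclideanSpace ℝ (Fin n)), 0 < Vpow u s x :=
    fun s x => Real.exp_pos _
  have hVmul : ∀ (s t : ℝ) (x : EuclideanSpace ℝ (Fin n)),
      Vpow u s x * Vpow u t x = Vpow u (s + t) x := by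
    intro s t x
    simp only [Vpow, ← Real.exp_add]
    congr 1; ring
  have hVcont : ∀ s : ℝ, Continuous (Vpow u s) := fun s =>
    Real.continuous_exp.comp (continuous_const.mul hu.continuous)
  have hVsm : ∀ s : ℝ, ContDiff ℝ (⊤ : ℕ∞) (Vpow u s) := fun s =>
    Real.contDiff_exp.comp (contDiff_const.mul hu)
  set κ : ℝ := 2 * mu + (n : ℝ) * lam with hκ
  have hgradφ : ContDiff ℝ (⊤ : ℕ∞) (fun y => gradient φ y) := gradient_contDiff hφ
  have hgradρ : ContDiff ℝ (⊤ : ℕ∞) (fun y => gradient ρ y) := gradient_contDiff hρsm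
  have hgradφz : ∀ x ∉ K, gradient φ x = 0 := by
    intro x hx
    have h : fderiv ℝ φ x = 0 := fderiv_of_notMem_tsupport ℝ hx
    simp [gradient, h]
  have hone : ∀ x, Vpow u (mu - lam) x * Vpow u (lam - mu) x = 1 := by
    intro x
    rw [hVmul, show mu - lam + (lam - mu) = 0 by ring]
    simp [Vpow]
  have hgρnorm : ∀ x ∈ U, ‖gradient ρ x‖ = Vpow u (lam - mu) x := by
    intro x hx
    have h1 := hρg x hx
    rw [gradD, norm_smul, Real.norm_eq_abs, abs_of_pos (hVpos _ x)] at h1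
    calc ‖gradient ρ x‖
        = (Vpow u (mu - lam) x * Vpow u (lam - mu) x) * ‖gradient ρ x‖ := by
          rw [hone x]; ring
      _ = Vpow u (lam - mu) x * (Vpow u (mu - lam) x * ‖gradient ρ x‖) := by ring
      _ = Vpow u (lam - mu) x := by rw [h1, mul_one]
  have hbpos : ∀ x, 0 < c + d * ρ x ^ θ := fun x =>
    add_pos_of_pos_of_nonneg hc (mul_nonneg hd.le (Real.rpow_nonneg (hρ0 x) θ))
  set w : EuclideanSpace ℝ (Fin n) → ℝ := fun y => (c + d * ρ y ^ θ) ^ β with hw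
  set P : EuclideanSpace ℝ (Fin n) → ℝ := fun y => ρ y ^ (-(2 * m + 1)) with hP
  set ψ : EuclideanSpace ℝ (Fin n) → ℝ := fun y => φ y * φ y * Vpow u κ y * w y * P y with hψ
  set Z : EuclideanSpace ℝ (Fin n) → EuclideanSpace ℝ (Fin n) :=
    fun y => ψ y • gradient ρ y with hZ
  have hwpos : ∀ x, 0 < w x := fun x => Real.rpow_pos_of_pos (hbpos x) β
  have hPpos : ∀ x ∈ U, 0 < P x := fun x hx => Real.rpow_pos_of_pos (hρpos x hx) _
  have hwCAt : ∀ x ∈ U, ContDiffAt ℝ (⊤ : ℕ∞) w x := by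
    intro x hx
    exact (contDiffAt_const.add (contDiffAt_const.mul
      (hρsm.contDiffAt.rpow_const_of_ne (hρpos x hx).ne'))).rpow_const_of_ne (hbpos x).ne'
  have hPCAt : ∀ x ∈ U, ContDiffAt ℝ (⊤ : ℕ∞) P x := fun x hx =>
    hρsm.contDiffAt.rpow_const_of_ne (hρpos x hx).ne'
  have hψCAt : ∀ x ∈ U, ContDiffAt ℝ (⊤ : ℕ∞) ψ x := fun x hx =>
    (((hφ.contDiffAt.mul hφ.contDiffAt).mul (hVsm κ).contDiffAt).mul (hwCAt x hx)).mul (hPCAt x hx)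
  have hψz : ∀ x ∉ K, ψ x = 0 := by
    intro x hx
    simp [hψ, hφz x hx]
  have hZsm : ContDiff ℝ (⊤ : ℕ∞) Z := by
    apply glue_contDiff hKc hKU
    · exact fun x hx => (hψCAt x hx).smul hgradρ.contDiffAt
    · intro x hx
      simp [hZ, hψz x hx]
  have hZc : HasCompactSupport Z :=
    HasCompactSupport.intro hKcomp (fun x hx => by simp [hZ, hψz x hx])
  have hdivint : ∫ x, divE Z x = 0 := integral_divE_eq_zero Z hZsm hZc
  have hDZ0 : ∀ x ∉ K, divE Z x = 0 := by
    intro x hx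
    have hsupp : Function.support Z ⊆ K := by
      intro y hy
      by_contra hyK
      exact hy (by simp [hZ, hψz y hyK])
    have hts : x ∉ tsupport Z := fun hmem => hx (closure_minimal hsupp hKc hmem)
    unfold divE
    rw [fderiv_of_notMem_tsupport ℝ hts]
    simp
  have hDZcont : Continuous (fun x => divE Z x) := by
    have h1 : Continuous (fun x => fderiv ℝ Z x) := hZsm.continuous_fderiv (by simp)
    unfold divE
    exact continuous_finset_sum _ fun i _ =>
      (EuclideanSpace.proj (𝕜 := ℝ) i).continuous.comp (h1.clm_apply continuous_const)
  have hDZint : Integrable (fun x => divE Z x) :=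
    hDZcont.integrable_of_hasCompactSupport (HasCompactSupport.intro hKcomp hDZ0)
  -- the three integrands
  set Lf : EuclideanSpace ℝ (Fin n) → ℝ := fun x =>
    ((c + d * ρ x ^ θ) ^ β / ρ x ^ (2 * m)) * ‖gradD lam mu u φ x‖ ^ 2 *
      Vpow u (τ + lam - mu) x with hLf
  set Rf : EuclideanSpace ℝ (Fin n) → ℝ := fun x =>
    ((c + d * ρ x ^ θ) ^ β / ρ x ^ (2 * m + 2)) * φ x ^ 2 * Vpow u (τ + lam - mu) x with hRf
  set Cf : EuclideanSpace ℝ (Fin n) → ℝ := fun x =>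
    2 * φ x * Vpow u κ x * w x * P x * (inner ℝ (gradient φ x) (gradient ρ x) : ℝ) with hCf
  have hLf0 : ∀ x, 0 ≤ Lf x := by
    intro x
    simp only [hLf]
    exact mul_nonneg (mul_nonneg (div_nonneg (Real.rpow_nonneg (hbpos x).le β)
      (Real.rpow_nonneg (hρ0 x) _)) (pow_nonneg (norm_nonneg _) 2)) (hVpos _ x).le
  have hRf0 : ∀ x, 0 ≤ Rf x := by
    intro x
    simp only [hRf]
    exact mul_nonneg (mul_nonneg (div_nonneg (Real.rpow_nonneg (hbpos x).le β)
      (Real.rpow_nonneg (hρ0 x) _)) (sq_nonneg _)) (hVpos _ x).le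
  have hLfK : ∀ x ∉ K, Lf x = 0 := by
    intro x hx
    simp [hLf, gradD, hgradφz x hx]
  have hRfK : ∀ x ∉ K, Rf x = 0 := by
    intro x hx
    simp [hRf, hφz x hx]
  have hCfK : ∀ x ∉ K, Cf x = 0 := by
    intro x hx
    simp [hCf, hφz x hx]
  have hLfcont : Continuous Lf := by
    apply glue_continuous hKc hKU _ hLfK
    intro x hx
    have h1 : ContinuousAt (fun y => (c + d * ρ y ^ θ) ^ β) x := (hwCAt x hx).continuousAt
    have h2 : ContinuousAt (fun y => ρ y ^ (2 * m)) x :=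
      (hρsm.contDiffAt.rpow_const_of_ne (hρpos x hx).ne').continuousAt
    have h3 : Continuous (fun y => ‖gradD lam mu u φ y‖ ^ 2) := by
      have hg : Continuous (fun y => gradD lam mu u φ y) := by
        unfold gradD
        exact (hVcont _).smul hgradφ.continuous
      exact hg.norm.pow 2
    exact ((h1.div h2 (Real.rpow_pos_of_pos (hρpos x hx) _).ne').mul h3.continuousAt).mul
      (hVcont _).continuousAt
  have hRfcont : Continuous Rf := by
    apply glue_continuous hKc hKU _ hRfK
    intro x hx
    have h1 : ContinuousAt (fun y => (c + d * ρ y ^ θ) ^ β) x := (hwCAt x hx).continuousAt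
    have h2 : ContinuousAt (fun y => ρ y ^ (2 * m + 2)) x :=
      (hρsm.contDiffAt.rpow_const_of_ne (hρpos x hx).ne').continuousAt
    exact ((h1.div h2 (Real.rpow_pos_of_pos (hρpos x hx) _).ne').mul
      ((hφ.continuous.pow 2).continuousAt)).mul (hVcont _).continuousAt
  have hCfcont : Continuous Cf := by
    apply glue_continuous hKc hKU _ hCfK
    intro x hx
    have hinner : Continuous (fun y => (inner ℝ (gradient φ y) (gradient ρ y) : ℝ)) :=
      hgradφ.continuous.inner hgradρ.continuous
    exact (((((continuous_const.mul hφ.continuous).mul (hVcont κ)).continuousAt.mul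
      (hwCAt x hx).continuousAt).mul (hPCAt x hx).continuousAt).mul hinner.continuousAt)
  have hLfint : Integrable Lf :=
    hLfcont.integrable_of_hasCompactSupport (HasCompactSupport.intro hKcomp hLfK)
  have hRfint : Integrable Rf :=
    hRfcont.integrable_of_hasCompactSupport (HasCompactSupport.intro hKcomp hRfK)
  have hCfint : Integrable Cf :=
    hCfcont.integrable_of_hasCompactSupport (HasCompactSupport.intro hKcomp hCfK)
  clear_value Lf Rf Cf Z ψ P w
  have hVT : ∀ x, Vpow u (τ + lam - mu) x = Vpow u κ x * Vpow u (lam - mu) x ^ 2 := by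
    intro x
    simp only [Vpow]
    rw [sq, ← Real.exp_add, ← Real.exp_add]
    congr 1
    rw [hκ, hτ]
    ring
  -- translation of the affine Laplacian lower bound
  have hlap : ∀ x ∈ U, C / ρ x * Vpow u (lam - mu) x ^ 2
      ≤ lapE ρ x + κ * fderiv ℝ u x (gradient ρ x) := by
    intro x hx
    have h := hΔ x hx
    unfold lapD at h
    rw [inner_gradient] at h
    rw [← hκ] at h
    have h2 := mul_le_mul_of_nonneg_right h (hVpos (lam - mu) x).le
    calc C / ρ x * Vpow u (lam - mu) x ^ 2
        = C / ρ x * Vpow u (lam - mu) x * Vpow u (lam - mu) x := by ring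
      _ ≤ Vpow u (mu - lam) x * (lapE ρ x + κ * fderiv ℝ u x (gradient ρ x)) *
          Vpow u (lam - mu) x := h2
      _ = (lapE ρ x + κ * fderiv ℝ u x (gradient ρ x)) *
          (Vpow u (mu - lam) x * Vpow u (lam - mu) x) := by ring
      _ = _ := by rw [hone x, mul_one]
  -- pointwise key inequality
  have key : ∀ x, Cf x + (C - 2 * m - 1) * Rf x ≤ divE Z x := by
    intro x
    by_cases hxK : x ∈ K
    · have hxU : x ∈ U := hKU hxK
      have hr : 0 < ρ x := hρpos x hxU
      have h1 : HasFDerivAt (fun y => φ y * φ y)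
          (φ x • fderiv ℝ φ x + φ x • fderiv ℝ φ x) x :=
        (hφd x).hasFDerivAt.mul (hφd x).hasFDerivAt
      have h2 : HasFDerivAt (fun y => Vpow u κ y)
          ((κ * Vpow u κ x) • fderiv ℝ u x) x := by
        have h := ((hud x).hasFDerivAt.const_mul κ).exp
        rw [show (κ * Vpow u κ x) • fderiv ℝ u x
            = Vpow u κ x • (κ • fderiv ℝ u x) by rw [smul_smul, mul_comm]]
        exact h
      have h3 : HasFDerivAt (fun y => ρ y ^ θ)
          ((θ * ρ x ^ (θ - 1)) • fderiv ℝ ρ x) x :=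
        (hρd x).hasFDerivAt.rpow_const (Or.inl hr.ne')
      have h4 : HasFDerivAt (fun y => c + d * ρ y ^ θ)
          (d • ((θ * ρ x ^ (θ - 1)) • fderiv ℝ ρ x)) x := (h3.const_mul d).const_add c
      have h5 : HasFDerivAt w
          ((β * (c + d * ρ x ^ θ) ^ (β - 1)) •
            (d • ((θ * ρ x ^ (θ - 1)) • fderiv ℝ ρ x))) x := by
        rw [hw]
        exact h4.rpow_const (Or.inl (hbpos x).ne')
      have h6 : HasFDerivAt P
          ((-(2 * m + 1) * ρ x ^ (-(2 * m + 1) - 1)) • fderiv ℝ ρ x) x := by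
        rw [hP]
        exact (hρd x).hasFDerivAt.rpow_const (Or.inl hr.ne')
      have hψL := ((h1.mul h2).mul h5).mul h6
      obtain ⟨D, hψD, happ⟩ : ∃ D : EuclideanSpace ℝ (Fin n) →L[ℝ] ℝ,
          HasFDerivAt ψ D x ∧ D (gradient ρ x) =
          2 * φ x * Vpow u κ x * w x * P x * fderiv ℝ φ x (gradient ρ x)
          + κ * (φ x ^ 2 * Vpow u κ x * w x * P x) * fderiv ℝ u x (gradient ρ x)
          + φ x ^ 2 * Vpow u κ x *
              (β * (c + d * ρ x ^ θ) ^ (β - 1) * (d * (θ * ρ x ^ (θ - 1)))) * P x *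
              fderiv ℝ ρ x (gradient ρ x)
          + φ x ^ 2 * Vpow u κ x * w x * (-(2 * m + 1) * ρ x ^ (-(2 * m + 1) - 1)) *
              fderiv ℝ ρ x (gradient ρ x) := by
        refine ⟨_, by rw [hψ]; exact hψL, ?_⟩
        simp only [ContinuousLinearMap.add_apply, ContinuousLinearMap.smul_apply,
          ContinuousLinearMap.smulRight_apply, smul_eq_mul, Pi.mul_apply]
        push_cast
        ring
      have hdformula : divE Z x = D (gradient ρ x) + ψ x * lapE ρ x := by
        rw [hZ]
        exact divE_smul_grad' hψD hρsm
      have hsρ : fderiv ℝ ρ x (gradient ρ x) = Vpow u (lam - mu) x ^ 2 := by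
        rw [← inner_gradient, real_inner_self_eq_norm_sq, hgρnorm x hxU]
      -- rpow identities
      have e1 : ρ x ^ (-(2 * m + 1) - 1) = ρ x ^ (-(2 * m + 1)) * (ρ x)⁻¹ := by
        rw [show -(2 * m + 1) - 1 = -(2 * m + 1) + (-1) by ring, Real.rpow_add hr,
          Real.rpow_neg_one]
      have e2 : ρ x ^ (-(2 * m + 1)) * (ρ x)⁻¹ = (ρ x ^ (2 * m + 2))⁻¹ := by
        rw [← Real.rpow_neg_one (ρ x), ← Real.rpow_add hr,
          show -(2 * m + 1) + (-1) = -(2 * m + 2) by ring, Real.rpow_neg hr.le]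
      have hψnn : 0 ≤ ψ x := by
        simp only [hψ]
        exact mul_nonneg (mul_nonneg (mul_nonneg (mul_self_nonneg _) (hVpos κ x).le)
          (hwpos x).le) (hPpos x hxU).le
      have hstep1 : ψ x * (C / ρ x * Vpow u (lam - mu) x ^ 2
            - κ * fderiv ℝ u x (gradient ρ x)) ≤ ψ x * lapE ρ x :=
        mul_le_mul_of_nonneg_left (by linarith [hlap x hxU]) hψnn
      have hQ : 0 ≤ φ x ^ 2 * Vpow u κ x *
          (β * (c + d * ρ x ^ θ) ^ (β - 1) * (d * (θ * ρ x ^ (θ - 1)))) * P x *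
          fderiv ℝ ρ x (gradient ρ x) := by
        rw [hsρ]
        have hfac : 0 ≤ (c + d * ρ x ^ θ) ^ (β - 1) * d * ρ x ^ (θ - 1) * P x *
            (φ x ^ 2 * Vpow u κ x * Vpow u (lam - mu) x ^ 2) := by
          have r1 := (Real.rpow_pos_of_pos (hbpos x) (β - 1)).le
          have r2 := (Real.rpow_pos_of_pos hr (θ - 1)).le
          have r3 := (hPpos x hxU).le
          have r4 := (hVpos κ x).le
          have r5 := sq_nonneg (Vpow u (lam - mu) x)
          have r6 := sq_nonneg (φ x)
          exact mul_nonneg (mul_nonneg (mul_nonneg (mul_nonneg r1 hd.le) r2) r3)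
            (mul_nonneg (mul_nonneg r6 r4) r5)
        have hexpand : φ x ^ 2 * Vpow u κ x *
            (β * (c + d * ρ x ^ θ) ^ (β - 1) * (d * (θ * ρ x ^ (θ - 1)))) * P x *
            Vpow u (lam - mu) x ^ 2
            = (θ * β) * ((c + d * ρ x ^ θ) ^ (β - 1) * d * ρ x ^ (θ - 1) * P x *
              (φ x ^ 2 * Vpow u κ x * Vpow u (lam - mu) x ^ 2)) := by ring
        rw [hexpand]
        exact mul_nonneg hθβ.le hfac
      have heq : Cf x + (C - 2 * m - 1) * Rf x =
          2 * φ x * Vpow u κ x * w x * P x * fderiv ℝ φ x (gradient ρ x)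
          + κ * (φ x ^ 2 * Vpow u κ x * w x * P x) * fderiv ℝ u x (gradient ρ x)
          + φ x ^ 2 * Vpow u κ x * w x * (-(2 * m + 1) * ρ x ^ (-(2 * m + 1) - 1)) *
              fderiv ℝ ρ x (gradient ρ x)
          + ψ x * (C / ρ x * Vpow u (lam - mu) x ^ 2
              - κ * fderiv ℝ u x (gradient ρ x)) := by
        simp only [hCf, hRf, hψ, hw, hP]
        rw [inner_gradient, hsρ, hVT x, e1, div_eq_mul_inv ((c + d * ρ x ^ θ) ^ β),
          ← e2, div_eq_mul_inv C]
        ring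
      rw [hdformula, happ]
      have final : ∀ cf rf a1 a2 q a4 ps sv lv : ℝ,
          cf + (C - 2 * m - 1) * rf = a1 + a2 + a4 + ps * sv → ps * sv ≤ ps * lv →
          0 ≤ q → cf + (C - 2 * m - 1) * rf ≤ a1 + a2 + q + a4 + ps * lv := by
        intros cf rf a1 a2 q a4 ps sv lv e1' e2' e3'
        linarith
      exact final _ _ _ _ _ _ _ _ _ heq hstep1 hQ
    · rw [hCfK x hxK, hRfK x hxK, hDZ0 x hxK]
      simp
  -- integrate the key inequality
  have hintCR : (∫ x, (Cf x + (C - 2 * m - 1) * Rf x)) ≤ ∫ x, divE Z x :=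
    integral_mono (hCfint.add (hRfint.const_mul _)) hDZint key
  rw [hdivint, integral_add hCfint (hRfint.const_mul _), integral_const_mul] at hintCR
  -- split on degenerate constant
  rcases eq_or_lt_of_le hm with hB0 | hBpos
  · rw [ge_iff_le, ← hB0]
    norm_num
    exact integral_nonneg hLf0
  · set ε : ℝ := (C - 2 * m - 1) / 2 with hε
    have hεpos : 0 < ε := by rw [hε]; linarith
    have hB2ε : C - 2 * m - 1 = 2 * ε := by rw [hε]; ring
    clear_value ε
    have key4 : ∀ x, -Cf x ≤ ε * Rf x + ε⁻¹ * Lf x := by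
      intro x
      by_cases hxK : x ∈ K
      · have hxU : x ∈ U := hKU hxK
        have hr : 0 < ρ x := hρpos x hxU
        have idp : ρ x ^ (-(m + 1)) * ρ x ^ (-m) = ρ x ^ (-(2 * m + 1)) := by
          rw [← Real.rpow_add hr]; congr 1; ring
        have idq : ρ x ^ (-(m + 1)) * ρ x ^ (-(m + 1)) = (ρ x ^ (2 * m + 2))⁻¹ := by
          rw [← Real.rpow_add hr, ← Real.rpow_neg hr.le]; congr 1; ring
        have idr : ρ x ^ (-m) * ρ x ^ (-m) = (ρ x ^ (2 * m))⁻¹ := by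
          rw [← Real.rpow_add hr, ← Real.rpow_neg hr.le]; congr 1; ring
        have h11 := hone x
        have eL : Lf x = Vpow u κ x * w x * (‖gradient φ x‖ * ρ x ^ (-m)) ^ 2 := by
          simp only [hLf, hw]
          unfold gradD
          rw [norm_smul, Real.norm_eq_abs, abs_of_pos (hVpos _ x), hVT x, div_eq_mul_inv,
            ← idr]
          linear_combination (Vpow u κ x * (c + d * ρ x ^ θ) ^ β * ‖gradient φ x‖ ^ 2 *
            (ρ x ^ (-m) * ρ x ^ (-m)) *
            (Vpow u (mu - lam) x * Vpow u (lam - mu) x + 1)) * h11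
        have eR : Rf x = Vpow u κ x * w x *
            (|φ x| * Vpow u (lam - mu) x * ρ x ^ (-(m + 1))) ^ 2 := by
          simp only [hRf, hw]
          rw [hVT x, div_eq_mul_inv, ← idq, mul_pow, mul_pow, sq_abs]
          ring
        have eC : -Cf x ≤ 2 * (|φ x| * Vpow u (lam - mu) x * ρ x ^ (-(m + 1))) *
            (‖gradient φ x‖ * ρ x ^ (-m)) * (Vpow u κ x * w x) := by
          have habs : |(inner ℝ (gradient φ x) (gradient ρ x) : ℝ)|
              ≤ ‖gradient φ x‖ * Vpow u (lam - mu) x := by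
            have h := abs_real_inner_le_norm (gradient φ x) (gradient ρ x)
            rwa [hgρnorm x hxU] at h
          have h2 : |Cf x| = 2 * |φ x| * Vpow u κ x * w x * P x *
              |(inner ℝ (gradient φ x) (gradient ρ x) : ℝ)| := by
            simp only [hCf, abs_mul]
            rw [abs_of_nonneg (by norm_num : (0:ℝ) ≤ 2), abs_of_pos (hVpos κ x),
              abs_of_pos (hwpos x), abs_of_pos (hPpos x hxU)]
          have h3 : 2 * |φ x| * Vpow u κ x * w x * P x *
              |(inner ℝ (gradient φ x) (gradient ρ x) : ℝ)|
              ≤ 2 * |φ x| * Vpow u κ x * w x * P x *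
                (‖gradient φ x‖ * Vpow u (lam - mu) x) :=
            mul_le_mul_of_nonneg_left habs
              (mul_nonneg (mul_nonneg (mul_nonneg (mul_nonneg (by norm_num) (abs_nonneg _))
                (hVpos κ x).le) (hwpos x).le) (hPpos x hxU).le)
          calc -Cf x ≤ |Cf x| := neg_le_abs _
            _ ≤ 2 * |φ x| * Vpow u κ x * w x * P x *
                (‖gradient φ x‖ * Vpow u (lam - mu) x) := by rw [h2]; exact h3
            _ = 2 * (|φ x| * Vpow u (lam - mu) x * ρ x ^ (-(m + 1))) *
                (‖gradient φ x‖ * ρ x ^ (-m)) * (Vpow u κ x * w x) := by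
              simp only [hP]
              rw [← idp]
              ring
        have hGW : 0 ≤ Vpow u κ x * w x := mul_nonneg (hVpos κ x).le (hwpos x).le
        have ham := amgm_aux (A := |φ x| * Vpow u (lam - mu) x * ρ x ^ (-(m + 1)))
          (B := ‖gradient φ x‖ * ρ x ^ (-m)) hεpos
        have hkey := mul_le_mul_of_nonneg_left ham hGW
        calc -Cf x ≤ 2 * (|φ x| * Vpow u (lam - mu) x * ρ x ^ (-(m + 1))) *
            (‖gradient φ x‖ * ρ x ^ (-m)) * (Vpow u κ x * w x) := eC
          _ ≤ ε * Rf x + ε⁻¹ * Lf x := by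
            rw [eL, eR]
            linarith [hkey]
      · rw [hCfK x hxK]
        have := mul_nonneg hεpos.le (hRf0 x)
        have := mul_nonneg (inv_pos.2 hεpos).le (hLf0 x)
        linarith
    have hintC : (∫ x, -Cf x) ≤ ∫ x, (ε * Rf x + ε⁻¹ * Lf x) :=
      integral_mono hCfint.neg ((hRfint.const_mul _).add (hLfint.const_mul _)) key4
    rw [integral_neg, integral_add (hRfint.const_mul _) (hLfint.const_mul _),
      integral_const_mul, integral_const_mul] at hintC
    rw [hB2ε] at hintCR
    have h5 : ε * ∫ x, Rf x ≤ ε⁻¹ * ∫ x, Lf x := by linarith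
    have h6 := mul_le_mul_of_nonneg_left h5 hεpos.le
    rw [← mul_assoc, ← mul_assoc, mul_inv_cancel₀ hεpos.ne', one_mul] at h6
    rw [ge_iff_le]
    rw [sq]
    exact h6
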